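/- Every phase carrier U ∈ SU(4) can be written as U = c · (Z_s ⊗ Z_t) · CPHASE(x) · Q, where c is a complex number of modulus 1, s, t, x ∈ ℝ, and Q is one of the eight permutation matrices of the form P or SWAP · P with P ∈ {I ⊗ I, I ⊗ X, X ⊗ I, X ⊗ X} (here I is the 2×2 identity and X = [[0,1],[1,0]]). In particular, every phase carrier is locally equivalent to CPHASE(x) or to SWAP · CPHASE(x) for some x ∈ ℝ. -/

import Mathlib

/-!
If `U (D ⊗ D') = (E ⊗ E') U` with diagonal factors, then `U p q ≠ 0` forces the diagonal entries
at `q` and at `p` to agree. Taking `Z_π ⊗ 1` and `1 ⊗ Z_π`, whose diagonals separate the basis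
states by their first and by their second qubit, every row of a phase carrier has at most one
nonzero entry, so a unitary phase carrier is a diagonal unitary times a permutation matrix.
Taking `Z_π ⊗ Z_π`, whose diagonal is `-1` exactly where the two qubits agree, and using that the
diagonal of any `Z_φ₀ ⊗ Z_φ₁` has product `1` over the complementary states `p`, `p + (1, 1)`,
the permutation `σ` maps complementary states to complementary states. The permutations of `Fin 2 × Fin 2` commuting with `p ↦ p + (1, 1)` are
the translations `p ↦ p + a` and the twisted translations `p ↦ swap p + a`, whose matrices are
`X^a₁ ⊗ X^a₂` and `SWAP * (X^a₁ ⊗ X^a₂)`. Finally the four phases of a diagonal unitary are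
exactly the four parameters of `c • (Z_s ⊗ Z_t) * CPHASE x`.
-/

open Complex Matrix Kronecker

noncomputable def Zgate (θ : ℝ) : Matrix (Fin 2) (Fin 2) ℂ :=
  !![exp (θ / 2 * I), 0; 0, exp (-(θ / 2) * I)]

/-- The Pauli X matrix. -/
def Xmat : Matrix (Fin 2) (Fin 2) ℂ := !![0, 1; 1, 0]

/-- The SWAP gate, with basis ordered as (0,0), (0,1), (1,0), (1,1). -/
def SWAP : Matrix (Fin 2 × Fin 2) (Fin 2 × Fin 2) ℂ :=
  fun p q => if p = (q.2, q.1) then 1 else 0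

/-- The CPHASE(x) gate, diag(1, 1, 1, e^{ix}). -/
noncomputable def CPHASE (x : ℝ) : Matrix (Fin 2 × Fin 2) (Fin 2 × Fin 2) ℂ :=
  fun p q => if p = q then (if p = (1, 1) then exp (x * I) else 1) else 0

/-- A two-qubit gate is a phase carrier if `Z` rotations can be carried across it. -/
def IsPhaseCarrier (U : Matrix (Fin 2 × Fin 2) (Fin 2 × Fin 2) ℂ) : Prop :=
  ∀ θ₀ θ₁ : ℝ, ∃ φ₀ φ₁ : ℝ, U * (Zgate θ₀ ⊗ₖ Zgate θ₁) = (Zgate φ₀ ⊗ₖ Zgate φ₁) * U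

open Equiv Real

namespace Matrix

variable {n : Type*} [Fintype n] [DecidableEq n]

theorem eq_of_mul_diagonal_eq_diagonal_mul {R : Type*} [CommRing R] [NoZeroDivisors R]
    {U : Matrix n n R} {d d' : n → R} (h : U * diagonal d = diagonal d' * U) {i j : n}
    (hij : U i j ≠ 0) : d j = d' i := by
  have hij' := congr_fun₂ h i j
  rw [mul_diagonal, diagonal_mul, mul_comm] at hij'
  exact mul_right_cancel₀ hij hij'

theorem permMatrix_mem_unitaryGroup {R : Type*} [CommRing R] [StarRing R] (σ : Perm n) :
    σ.permMatrix R ∈ unitaryGroup n R := by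
  rw [mem_unitaryGroup_iff, star_eq_conjTranspose, conjTranspose_permMatrix, ← permMatrix_mul,
    inv_mul_cancel, permMatrix_one]

theorem permMatrix_prodCongr {m n R : Type*} [DecidableEq m] [DecidableEq n]
    [MulZeroOneClass R] (σ : Perm m) (τ : Perm n) :
    Perm.permMatrix R (σ.prodCongr τ) = σ.permMatrix R ⊗ₖ τ.permMatrix R := by
  ext ⟨i, i'⟩ ⟨j, j'⟩
  simp [kroneckerMap_apply, ← ite_and, and_comm]

variable {𝕜 : Type*} [RCLike 𝕜]

theorem diagonal_mem_unitaryGroup {d : n → 𝕜} (hd : ∀ i, ‖d i‖ = 1) :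
    diagonal d ∈ unitaryGroup n 𝕜 := by
  rw [mem_unitaryGroup_iff, star_eq_conjTranspose, diagonal_conjTranspose,
    diagonal_mul_diagonal, ← diagonal_one]
  congr 1
  funext i
  rw [Pi.star_apply, RCLike.star_def, RCLike.mul_conj, hd]
  norm_num

theorem exists_eq_diagonal_mul_permMatrix_of_mem_unitaryGroup {U : Matrix n n 𝕜}
    (hU : U ∈ unitaryGroup n 𝕜) (hrow : ∀ i j j', U i j ≠ 0 → U i j' ≠ 0 → j = j') :
    ∃ σ : Perm n, (∀ i, ‖U i (σ i)‖ = 1) ∧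
      U = diagonal (fun i => U i (σ i)) * σ.permMatrix 𝕜 := by
  have hUU : U * star U = 1 := mem_unitaryGroup_iff.mp hU
  have hentry : ∀ i i' j, U i j ≠ 0 → (U * star U) i i' = U i j * star (U i' j) := by
    intro i i' j hj
    rw [mul_apply, Finset.sum_eq_single j]
    · rfl
    · intro k _ hk
      by_contra h
      exact hk (hrow i k j (left_ne_zero_of_mul h) hj)
    · simp
  have hnz : ∀ i, ∃ j, U i j ≠ 0 := by
    intro i
    by_contra! h
    simpa [mul_apply, h] using congr_fun₂ hUU i i
  choose f hf using hnz
  have hinj : Function.Injective f := by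
    intro i i' hii'
    by_contra hne
    have h := hentry i i' (f i) (hf i)
    rw [hUU, one_apply_ne hne] at h
    exact mul_ne_zero (hf i) (star_ne_zero.mpr (hii' ▸ hf i')) h.symm
  have hnorm : ∀ i, ‖U i (f i)‖ = 1 := by
    intro i
    have h := hentry i i (f i) (hf i)
    rw [hUU, one_apply_eq, RCLike.star_def, RCLike.mul_conj] at h
    exact (pow_eq_one_iff_of_nonneg (norm_nonneg _) two_ne_zero).mp (by exact_mod_cast h.symm)
  refine ⟨Equiv.ofBijective f hinj.bijective_of_finite, hnorm, ?_⟩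
  ext i j
  rw [diagonal_mul]
  by_cases hj : j = f i
  · subst hj
    simp
  · simp only [PEquiv.toMatrix_apply, toPEquiv_apply, Option.mem_def, Option.some_inj,
      ofBijective_apply, Ne.symm hj, if_false, mul_zero]
    by_contra h
    exact hj (hrow i j (f i) h (hf i))

end Matrix

noncomputable def zPhase (θ : ℝ) : Fin 2 → ℂ := ![exp (θ / 2 * I), exp (-(θ / 2) * I)]

theorem Zgate_eq_diagonal (θ : ℝ) : Zgate θ = diagonal (zPhase θ) := by
  ext i j
  fin_cases i <;> fin_cases j <;> simp [Zgate, zPhase]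

theorem Zgate_kronecker_Zgate (θ₀ θ₁ : ℝ) :
    Zgate θ₀ ⊗ₖ Zgate θ₁ = diagonal fun q : Fin 2 × Fin 2 => zPhase θ₀ q.1 * zPhase θ₁ q.2 := by
  rw [Zgate_eq_diagonal, Zgate_eq_diagonal, diagonal_kronecker_diagonal]

theorem CPHASE_eq_diagonal (x : ℝ) :
    CPHASE x = diagonal fun p : Fin 2 × Fin 2 => if p = (1, 1) then exp (x * I) else 1 := by
  ext p q
  by_cases h : p = q <;> simp [CPHASE, diagonal, h]

theorem zPhase_zero : zPhase 0 = 1 := by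
  funext i
  fin_cases i <;> simp [zPhase]

theorem zPhase_pi : zPhase π = ![I, -I] := by
  funext i
  fin_cases i
  · simp [zPhase, exp_pi_div_two_mul_I]
  · simp [zPhase, neg_mul, Complex.exp_neg, exp_pi_div_two_mul_I]

theorem zPhase_pi_injective : Function.Injective (zPhase π) := by
  rw [zPhase_pi]
  intro i j h
  fin_cases i <;> fin_cases j <;> simp_all [Complex.ext_iff] <;> norm_num at h

theorem zPhase_pi_mul_zPhase_pi (i j : Fin 2) :
    zPhase π i * zPhase π j = if i = j then -1 else 1 := by
  rw [zPhase_pi]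
  fin_cases i <;> fin_cases j <;> simp

theorem zPhase_mul_zPhase_add_one (θ : ℝ) (i : Fin 2) : zPhase θ i * zPhase θ (i + 1) = 1 := by
  fin_cases i <;> simp [zPhase, ← Complex.exp_add]

theorem Zgate_mem_unitaryGroup (θ : ℝ) : Zgate θ ∈ unitaryGroup (Fin 2) ℂ := by
  rw [Zgate_eq_diagonal]
  refine diagonal_mem_unitaryGroup fun i => ?_
  fin_cases i <;> simp [zPhase, norm_exp]

theorem CPHASE_mul_SWAP (x : ℝ) : CPHASE x * SWAP = SWAP * CPHASE x := by
  ext p q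
  fin_cases p <;> fin_cases q <;> simp [mul_apply, SWAP, CPHASE]

theorem SWAP_eq_permMatrix : SWAP = Perm.permMatrix ℂ (prodComm (Fin 2) (Fin 2)) := by
  ext ⟨i, i'⟩ ⟨j, j'⟩
  simp [SWAP, Prod.ext_iff, and_comm]

theorem permMatrix_addRight_eq_one_or_Xmat (i : Fin 2) :
    (Equiv.addRight i).permMatrix ℂ = 1 ∨ (Equiv.addRight i).permMatrix ℂ = Xmat := by
  fin_cases i
  · left
    simp
  · right
    ext j k
    fin_cases j <;> fin_cases k <;> simp [Xmat]

theorem diagonal_exp_mul_I_eq_smul_Zgate_CPHASE (α : Fin 2 × Fin 2 → ℝ) :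
    diagonal (fun p => exp (α p * I)) =
      exp (((α (0, 1) + α (1, 0)) / 2 : ℝ) * I) •
        ((Zgate (α (0, 0) - α (1, 0)) ⊗ₖ Zgate (α (0, 0) - α (0, 1))) *
          CPHASE (α (1, 1) + α (0, 0) - α (0, 1) - α (1, 0))) := by
  rw [Zgate_kronecker_Zgate, CPHASE_eq_diagonal, diagonal_mul_diagonal, ← diagonal_smul,
    diagonal_eq_diagonal_iff]
  rintro ⟨i, j⟩
  fin_cases i <;> fin_cases j <;> simp [zPhase, ← Complex.exp_add] <;> congr 1 <;> ring

theorem Equiv.Perm.eq_addRight_or_of_map_add_one_one (σ : Perm (Fin 2 × Fin 2))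
    (hσ : ∀ p, σ (p + (1, 1)) = σ p + (1, 1)) :
    ∃ a, σ = Equiv.addRight a ∨ σ = Equiv.addRight a * prodComm (Fin 2) (Fin 2) := by
  revert σ
  decide

theorem permMatrix_eq_of_map_add_one_one (σ : Perm (Fin 2 × Fin 2))
    (hσ : ∀ p, σ (p + (1, 1)) = σ p + (1, 1)) :
    ∃ a : Fin 2 × Fin 2, σ.permMatrix ℂ =
        (Equiv.addRight a.1).permMatrix ℂ ⊗ₖ (Equiv.addRight a.2).permMatrix ℂ ∨
      σ.permMatrix ℂ =
        SWAP * ((Equiv.addRight a.1).permMatrix ℂ ⊗ₖ (Equiv.addRight a.2).permMatrix ℂ) := by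
  have hprod : ∀ a : Fin 2 × Fin 2,
      Equiv.addRight a = (Equiv.addRight a.1).prodCongr (Equiv.addRight a.2) := fun _ => rfl
  obtain ⟨a, rfl | rfl⟩ := Equiv.Perm.eq_addRight_or_of_map_add_one_one σ hσ
  · exact ⟨a, Or.inl (by rw [hprod, permMatrix_prodCongr])⟩
  · exact ⟨a, Or.inr (by rw [permMatrix_mul, ← SWAP_eq_permMatrix, hprod, permMatrix_prodCongr])⟩

namespace IsPhaseCarrier

variable {U : Matrix (Fin 2 × Fin 2) (Fin 2 × Fin 2) ℂ}

theorem exists_phases (hpc : IsPhaseCarrier U) (θ₀ θ₁ : ℝ) :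
    ∃ φ₀ φ₁ : ℝ, ∀ p q : Fin 2 × Fin 2, U p q ≠ 0 →
      zPhase θ₀ q.1 * zPhase θ₁ q.2 = zPhase φ₀ p.1 * zPhase φ₁ p.2 := by
  obtain ⟨φ₀, φ₁, h⟩ := hpc θ₀ θ₁
  rw [Zgate_kronecker_Zgate, Zgate_kronecker_Zgate] at h
  exact ⟨φ₀, φ₁, fun p q => eq_of_mul_diagonal_eq_diagonal_mul h⟩

theorem eq_of_apply_ne_zero (hpc : IsPhaseCarrier U) {p q q' : Fin 2 × Fin 2}
    (hq : U p q ≠ 0) (hq' : U p q' ≠ 0) : q = q' := by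
  obtain ⟨φ₀, φ₁, h₀⟩ := hpc.exists_phases π 0
  obtain ⟨ψ₀, ψ₁, h₁⟩ := hpc.exists_phases 0 π
  have e₀ := (h₀ p q hq).trans (h₀ p q' hq').symm
  have e₁ := (h₁ p q hq).trans (h₁ p q' hq').symm
  simp only [zPhase_zero, Pi.one_apply, mul_one, one_mul] at e₀ e₁
  exact Prod.ext (zPhase_pi_injective e₀) (zPhase_pi_injective e₁)

theorem map_add_one_one (hpc : IsPhaseCarrier U) {σ : Perm (Fin 2 × Fin 2)}
    (hσ : ∀ p, U p (σ p) ≠ 0) (p : Fin 2 × Fin 2) : σ (p + (1, 1)) = σ p + (1, 1) := by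
  obtain ⟨φ₀, φ₁, h⟩ := hpc.exists_phases π π
  have hprod : (zPhase π (σ p).1 * zPhase π (σ p).2) *
      (zPhase π (σ (p + (1, 1))).1 * zPhase π (σ (p + (1, 1))).2) = 1 := by
    rw [h _ _ (hσ p), h _ _ (hσ _)]
    calc zPhase φ₀ p.1 * zPhase φ₁ p.2 * (zPhase φ₀ (p.1 + 1) * zPhase φ₁ (p.2 + 1))
        = (zPhase φ₀ p.1 * zPhase φ₀ (p.1 + 1)) * (zPhase φ₁ p.2 * zPhase φ₁ (p.2 + 1)) := by
          ring
      _ = 1 := by rw [zPhase_mul_zPhase_add_one, zPhase_mul_zPhase_add_one, one_mul]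
  rw [zPhase_pi_mul_zPhase_pi, zPhase_pi_mul_zPhase_pi] at hprod
  have hparity : ((σ p).1 = (σ p).2 ↔ (σ (p + (1, 1))).1 = (σ (p + (1, 1))).2) := by
    split_ifs at hprod <;> norm_num at hprod <;> tauto
  have hshift : ∀ q : Fin 2 × Fin 2, q + (1, 1) ≠ q := by decide
  have hpairs : ∀ a b : Fin 2 × Fin 2, (a.1 = a.2 ↔ b.1 = b.2) → b ≠ a → b = a + (1, 1) := by
    decide
  exact hpairs _ _ hparity (σ.injective.ne (hshift p))

theorem exists_eq_diagonal_mul_permMatrix (hpc : IsPhaseCarrier U)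
    (hU : U ∈ unitaryGroup (Fin 2 × Fin 2) ℂ) :
    ∃ σ : Perm (Fin 2 × Fin 2), (∀ p, ‖U p (σ p)‖ = 1) ∧
      (∀ p, σ (p + (1, 1)) = σ p + (1, 1)) ∧
      U = diagonal (fun p => U p (σ p)) * σ.permMatrix ℂ := by
  obtain ⟨σ, hnorm, hUσ⟩ := exists_eq_diagonal_mul_permMatrix_of_mem_unitaryGroup hU
    fun _ _ _ => hpc.eq_of_apply_ne_zero
  have hσ : ∀ p, U p (σ p) ≠ 0 := fun p => norm_ne_zero_iff.mp (by rw [hnorm]; exact one_ne_zero)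
  exact ⟨σ, hnorm, hpc.map_add_one_one hσ, hUσ⟩

end IsPhaseCarrier

theorem phase_carrier_classification (U : Matrix (Fin 2 × Fin 2) (Fin 2 × Fin 2) ℂ)
    (hU : U ∈ Matrix.specialUnitaryGroup (Fin 2 × Fin 2) ℂ)
    (hpc : IsPhaseCarrier U) :
    (∃ (c : ℂ) (s t x : ℝ) (Q : Matrix (Fin 2 × Fin 2) (Fin 2 × Fin 2) ℂ),
      ‖c‖ = 1 ∧
      Q ∈ ({(1 : Matrix (Fin 2) (Fin 2) ℂ) ⊗ₖ (1 : Matrix (Fin 2) (Fin 2) ℂ),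
            (1 : Matrix (Fin 2) (Fin 2) ℂ) ⊗ₖ Xmat,
            Xmat ⊗ₖ (1 : Matrix (Fin 2) (Fin 2) ℂ), Xmat ⊗ₖ Xmat,
            SWAP * ((1 : Matrix (Fin 2) (Fin 2) ℂ) ⊗ₖ (1 : Matrix (Fin 2) (Fin 2) ℂ)),
            SWAP * ((1 : Matrix (Fin 2) (Fin 2) ℂ) ⊗ₖ Xmat),
            SWAP * (Xmat ⊗ₖ (1 : Matrix (Fin 2) (Fin 2) ℂ)),
            SWAP * (Xmat ⊗ₖ Xmat)} : Set (Matrix (Fin 2 × Fin 2) (Fin 2 × Fin 2) ℂ)) ∧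
      U = c • ((Zgate s ⊗ₖ Zgate t) * CPHASE x * Q)) ∧
    (∃ (x : ℝ) (A B C D : Matrix (Fin 2) (Fin 2) ℂ),
      A ∈ Matrix.unitaryGroup (Fin 2) ℂ ∧ B ∈ Matrix.unitaryGroup (Fin 2) ℂ ∧
      C ∈ Matrix.unitaryGroup (Fin 2) ℂ ∧ D ∈ Matrix.unitaryGroup (Fin 2) ℂ ∧
      (U = (A ⊗ₖ B) * CPHASE x * (C ⊗ₖ D) ∨
        U = (A ⊗ₖ B) * (SWAP * CPHASE x) * (C ⊗ₖ D))) := by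
  obtain ⟨σ, hnorm, hσ, hUσ⟩ :=
    hpc.exists_eq_diagonal_mul_permMatrix (mem_specialUnitaryGroup_iff.mp hU).1
  obtain ⟨a, hQ⟩ := permMatrix_eq_of_map_add_one_one σ hσ
  set α : Fin 2 × Fin 2 → ℝ := fun p => arg (U p (σ p))
  set c := exp (((α (0, 1) + α (1, 0)) / 2 : ℝ) * I)
  set s := α (0, 0) - α (1, 0)
  set t := α (0, 0) - α (0, 1)
  set x := α (1, 1) + α (0, 0) - α (0, 1) - α (1, 0)
  have hU' : U = c • ((Zgate s ⊗ₖ Zgate t) * CPHASE x * σ.permMatrix ℂ) := by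
    have hα : (fun p => U p (σ p)) = fun p => exp (α p * I) := by
      funext p
      simpa [hnorm p] using (norm_mul_exp_arg_mul_I (U p (σ p))).symm
    rw [hUσ, hα, diagonal_exp_mul_I_eq_smul_Zgate_CPHASE, smul_mul_assoc]
  have hc : ‖c‖ = 1 := norm_exp_ofReal_mul_I _
  refine ⟨⟨c, s, t, x, _, hc, ?_, hU'⟩, x, c • Zgate s, Zgate t,
    (Equiv.addRight a.1).permMatrix ℂ, (Equiv.addRight a.2).permMatrix ℂ,
    Unitary.smul_mem_of_mem ?_ (Zgate_mem_unitaryGroup s), Zgate_mem_unitaryGroup t,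
    permMatrix_mem_unitaryGroup _, permMatrix_mem_unitaryGroup _, ?_⟩
  · rcases permMatrix_addRight_eq_one_or_Xmat a.1 with h₁ | h₁ <;>
      rcases permMatrix_addRight_eq_one_or_Xmat a.2 with h₂ | h₂ <;>
      rcases hQ with hQ | hQ <;> simp [hQ, h₁, h₂]
  · rw [Unitary.mem_iff, star_def, mul_conj', conj_mul', hc]
    norm_num
  · rw [hU', ← smul_mul_assoc, ← smul_mul_assoc, smul_kronecker]
    rcases hQ with hQ | hQ
    · exact Or.inl (by rw [hQ])
    · exact Or.inr (by rw [hQ, ← CPHASE_mul_SWAP]; simp only [mul_assoc])
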